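/- arXiv:2506.22971 — 2 statements merged into one kernel-verified Lean document; each statement's English description precedes it below -/
import Mathlib

section
/- The unique fixed point V* of a Bellman operator B with rewards R(s,a) non-decreasing in s and stochastically monotone transition kernels is a non-decreasing function of s. -/
open Finset

noncomputable def bellman {S A : Type*} [Fintype S] [Fintype A] [Nonempty A]
    (R : S → A → ℝ) (β : ℝ) (p : A → S → S → ℝ) (v : S → ℝ) (s : S) : ℝ :=
  Finset.univ.sup' Finset.univ_nonempty fun a =>
    R s a + β * ∑ s', p a s s' * v s'

/-!
The fixed point of a contraction lies in every closed invariant set that is nonempty, since it is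
the limit of the iterates of any starting point. The Bellman operator is a `β`-contraction for the
sup norm, and under the monotonicity assumptions on `R` and `p` it maps non-decreasing functions
to non-decreasing functions; these form a closed set, so it contains the fixed point.
-/

theorem ContractingWith.mem_of_isFixedPt {α : Type*} [MetricSpace α] [CompleteSpace α]
    {K : NNReal} {f : α → α} (hf : ContractingWith K f) {s : Set α} (hs : IsClosed s)
    (hsf : Set.MapsTo f s s) {x y : α} (hx : x ∈ s) (hy : Function.IsFixedPt f y) : y ∈ s := by
  have : Nonempty α := ⟨x⟩
  rw [hf.fixedPoint_unique hy]
  exact hs.mem_of_tendsto (hf.tendsto_iterate_fixedPoint x)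
    (Filter.Eventually.of_forall fun n => hsf.iterate n hx)

section Bellman

variable {S A : Type*} [Fintype S] [Fintype A] [Nonempty A]
  {R : S → A → ℝ} {β : ℝ} {p : A → S → S → ℝ}

theorem bellman_le_bellman_add (hβ : 0 ≤ β) (hp0 : ∀ a s s', 0 ≤ p a s s')
    (hp1 : ∀ a s, ∑ s', p a s s' = 1) {f g : S → ℝ} {D : ℝ} (h : ∀ t, f t ≤ g t + D) (s : S) :
    bellman R β p f s ≤ bellman R β p g s + β * D := by
  refine sup'_le _ _ fun a _ => ?_
  have hexp : ∑ s', p a s s' * f s' ≤ ∑ s', p a s s' * g s' + D := calc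
    ∑ s', p a s s' * f s' ≤ ∑ s', p a s s' * (g s' + D) :=
      sum_le_sum fun t _ => mul_le_mul_of_nonneg_left (h t) (hp0 a s t)
    _ = ∑ s', p a s s' * g s' + D := by
      simp only [mul_add, sum_add_distrib, ← sum_mul, hp1, one_mul]
  calc R s a + β * ∑ s', p a s s' * f s'
      ≤ (R s a + β * ∑ s', p a s s' * g s') + β * D := by
        linarith [mul_le_mul_of_nonneg_left hexp hβ]
    _ ≤ bellman R β p g s + β * D := by
        gcongr
        exact le_sup' (fun a => R s a + β * ∑ s', p a s s' * g s') (mem_univ a)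

theorem bellman_contractingWith (hβ0 : 0 ≤ β) (hβ1 : β < 1) (hp0 : ∀ a s s', 0 ≤ p a s s')
    (hp1 : ∀ a s, ∑ s', p a s s' = 1) :
    ContractingWith ⟨β, hβ0⟩ (bellman R β p) := by
  refine ⟨hβ1, LipschitzWith.of_dist_le_mul fun f g => ?_⟩
  have hclose : ∀ t, f t ≤ g t + dist f g ∧ g t ≤ f t + dist f g := fun t => by
    have := dist_le_pi_dist f g t
    rw [Real.dist_eq, abs_sub_le_iff] at this
    constructor <;> linarith
  refine dist_pi_le_iff (mul_nonneg hβ0 dist_nonneg) |>.2 fun s => ?_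
  rw [Real.dist_eq, abs_sub_le_iff]
  constructor <;>
    linarith [bellman_le_bellman_add (R := R) hβ0 hp0 hp1 (fun t => (hclose t).1) s,
      bellman_le_bellman_add (R := R) hβ0 hp0 hp1 (fun t => (hclose t).2) s]

theorem Monotone.bellman [Preorder S] (hβ : 0 ≤ β) (hR : ∀ a, Monotone fun s => R s a)
    (hmono : ∀ a : A, ∀ f : S → ℝ, Monotone f → ∀ s s'' : S, s'' ≤ s →
      ∑ s', p a s'' s' * f s' ≤ ∑ s', p a s s' * f s')
    {f : S → ℝ} (hf : Monotone f) : Monotone (bellman R β p f) := fun s'' s h =>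
  sup'_le _ _ fun a _ => calc
    R s'' a + β * ∑ s', p a s'' s' * f s' ≤ R s a + β * ∑ s', p a s s' * f s' :=
      add_le_add (hR a h) (mul_le_mul_of_nonneg_left (hmono a f hf s s'' h) hβ)
    _ ≤ _ := le_sup' (fun a => R s a + β * ∑ s', p a s s' * f s') (mem_univ a)

end Bellman

/-- the unique fixed point of the Bellman operator with rewards
non-decreasing in the state and stochastically monotone kernels is itself a
non-decreasing function of the state. -/
theorem fixed_point_monotone {S A : Type*} [Fintype S] [LinearOrder S]
    [Fintype A] [Nonempty A]
    (R : S → A → ℝ) (β : ℝ) (hβ0 : 0 < β) (hβ1 : β < 1)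
    (p : A → S → S → ℝ)
    (hp0 : ∀ a s s', 0 ≤ p a s s') (hp1 : ∀ a s, ∑ s', p a s s' = 1)
    (hR : ∀ a, Monotone fun s => R s a)
    (hmono : ∀ a : A, ∀ f : S → ℝ, Monotone f → ∀ s s'' : S, s'' ≤ s →
      ∑ s', p a s'' s' * f s' ≤ ∑ s', p a s s' * f s')
    (Vstar : S → ℝ) (hfix : bellman R β p Vstar = Vstar) :
    Monotone Vstar :=
  (bellman_contractingWith hβ0.le hβ1 hp0 hp1).mem_of_isFixedPt (s := {f | Monotone f})
    isClosed_monotone (fun _ hf => hf.bellman hβ0.le hR hmono) (monotone_const (c := 0)) hfix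
end

section
/- Suppose for each state s and each action a, the policy π*(a) simultaneously maximizes the immediate reward π ↦ R(s, a, π) over Π_a and maximizes π ↦ Σ_{s'} p_{a,π}(s,s') W(s') for every non-decreasing W (by stochastic dominance p_{a,π*(a)}(s,·) ≥_st p_{a,π}(s,·) for all π ∈ Π_a). If the fixed point V* of the combined Bellman operator is non-decreasing, then max_{a} max_{π ∈ Π_a} [R(s,a,π) + β Σ_{s'} p_{a,π}(s,s') V*(s')] = max_{a} [R(s,a,π*(a)) + β Σ_{s'} p_{a,π*(a)}(s,s') V*(s')], i.e., the nested (central) and selection-based (federal) Bellman operators agree at V*. -/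
open Finset

/-- if for every allocation `a` the policy `π*(a)` maximizes the
immediate reward over `Π_a` and its transition law stochastically dominates that
of every `π ∈ Π_a`, and the fixed point `V*` is non-decreasing, then the nested
(central) and selection-based (federal) Bellman operators agree at `V*`. -/
theorem central_federal_bellman_agree {S A Q : Type*} [Fintype S] [LinearOrder S]
    [Fintype A] [Nonempty A] [Fintype Q]
    (R : S → A → Q → ℝ) (β : ℝ) (hβ0 : 0 < β) (hβ1 : β < 1)
    (M : ℝ) (hRb : ∀ s a π, |R s a π| ≤ M)
    (p : A → Q → S → S → ℝ)
    (hp0 : ∀ a π s s', 0 ≤ p a π s s') (hp1 : ∀ a π s, ∑ s', p a π s s' = 1)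
    (Pa : A → Finset Q) (hPa : ∀ a, (Pa a).Nonempty)
    (πstar : A → Q) (hπmem : ∀ a, πstar a ∈ Pa a)
    (hmyopic : ∀ (s : S) (a : A), ∀ π ∈ Pa a, R s a π ≤ R s a (πstar a))
    (hdom : ∀ (a : A), ∀ π ∈ Pa a, ∀ (s : S) (W : S → ℝ), Monotone W →
      ∑ s', p a π s s' * W s' ≤ ∑ s', p a (πstar a) s s' * W s')
    (Vstar : S → ℝ) (hmonoV : Monotone Vstar) :
    ∀ s : S,
      (Finset.univ.sup' Finset.univ_nonempty fun a =>
        (Pa a).sup' (hPa a) fun π =>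
          R s a π + β * ∑ s', p a π s s' * Vstar s') =
      Finset.univ.sup' Finset.univ_nonempty fun a =>
        R s a (πstar a) + β * ∑ s', p a (πstar a) s s' * Vstar s' := by
  intro s
  have h : ∀ a : A, ((Pa a).sup' (hPa a) fun π =>
      R s a π + β * ∑ s', p a π s s' * Vstar s') =
      R s a (πstar a) + β * ∑ s', p a (πstar a) s s' * Vstar s' := by
    intro a
    apply le_antisymm
    · apply Finset.sup'_le
      intro π hπ
      exact add_le_add (hmyopic s a π hπ)
        (mul_le_mul_of_nonneg_left (hdom a π hπ s Vstar hmonoV) hβ0.le)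
    · exact Finset.le_sup' (fun π => R s a π + β * ∑ s', p a π s s' * Vstar s') (hπmem a)
  simp only [h]
end
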